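/- arXiv:2310.15903 — 3 statements merged into one kernel-verified Lean document; each statement's English description precedes it below -/
import Mathlib

section
/- Let Y_m be the K × C(K,m) indicator matrix of all m-subsets of [K] with 1 ≤ m ≤ K-1, let a = ((m-1)/(K-1))·C(K-1,m-1), b = (m/K)·C(K,m), c = (m/(K-1))·C(K-1,m), τ = (a+c)/(bc), η = −a/(bc), and Θ the all-ones matrix of size K × C(K,m). Then (τ·Y_m + η·Θ)·Y_m^T = I_K; that is, τ·Y_m^T + η·Θ^T is a right inverse of Y_m. -/
/-!
Counting `m`-subsets of `[K]` through a point gives the row sums `b = C(K-1, m-1)` of `Y`, and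
counting those through `i` but not `j` gives `Y (Θ - Y)ᵀ = c (J - I)` with `c = C(K-2, m-1)`;
subtracting the two yields the Gram identity `Y Yᵀ = c I + (b - c) J`, and the paper's `a` is
`b - c`. As `Θ Yᵀ = (Y Θᵀ)ᵀ = Y Yᵀ + c (J - I)`, the product `(τ Y + η Θ) Yᵀ` is a combination
of `I` and `J` whose coefficients reduce to `1` and `0` as soon as `b, c ≠ 0`.
-/

open Matrix

namespace Nat

theorem cast_add_one_div_mul_choose_add_one {R : Type*} [Field R] [CharZero R] (n k : ℕ) :
    ((k + 1 : ℕ) : R) / (n + 1 : ℕ) * (n + 1).choose (k + 1) = n.choose k := by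
  have h : ((n + 1 : ℕ) : R) * n.choose k = (n + 1).choose (k + 1) * (k + 1 : ℕ) := by
    exact_mod_cast add_one_mul_choose_eq n k
  rw [div_mul_eq_mul_div, div_eq_iff (cast_ne_zero.2 n.succ_ne_zero)]
  linear_combination -h

theorem cast_div_mul_choose_eq_sub {R : Type*} [Field R] [CharZero R] (n k : ℕ) :
    (k : R) / (n + 1 : ℕ) * (n + 1).choose k = (n + 1).choose k - n.choose k := by
  cases k with
  | zero => simp
  | succ j =>
    rw [cast_add_one_div_mul_choose_add_one, choose_succ_succ', cast_add, add_sub_cancel_right]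

end Nat

namespace Finset

variable {α : Type*} [DecidableEq α] {s : Finset α} {i j : α}

theorem card_filter_mem_powersetCard_add_one (hi : i ∈ s) (k : ℕ) :
    #{S ∈ s.powersetCard (k + 1) | i ∈ S} = (#s - 1).choose k := by
  simpa using card_filter_powersetCard_subset {i} s (k + 1) (by simpa) (by simp)

theorem card_filter_mem_and_notMem_powersetCard_add_one (hi : i ∈ s) (hj : j ∈ s) (hij : i ≠ j)
    (k : ℕ) : #{S ∈ s.powersetCard (k + 1) | i ∈ S ∧ j ∉ S} = (#s - 2).choose k := by
  have hfilter : {S ∈ s.powersetCard (k + 1) | i ∈ S ∧ j ∉ S}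
      = {S ∈ (s.erase j).powersetCard (k + 1) | i ∈ S} := by
    ext S
    simp only [mem_filter, mem_powersetCard, subset_erase]
    tauto
  rw [hfilter, card_filter_mem_powersetCard_add_one (mem_erase.2 ⟨hij, hi⟩), card_erase_of_mem hj]
  rfl

end Finset

namespace Matrix

def allOnes (m n R : Type*) [One R] : Matrix m n R :=
  of fun _ _ => 1

@[simp]
theorem allOnes_apply {m n R : Type*} [One R] (i : m) (j : n) : allOnes m n R i j = 1 :=
  rfl

@[simp]
theorem transpose_allOnes {m n R : Type*} [One R] : (allOnes m n R)ᵀ = allOnes n m R :=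
  rfl

theorem mul_transpose_eq_one_of_gram {ι κ R : Type*} [Fintype κ] [DecidableEq ι] [Field R]
    (Y Θ : Matrix ι κ R) {a b c : R} (hb : b ≠ 0) (hc : c ≠ 0)
    (hgram : Y * Yᵀ = (b - a) • 1 + a • allOnes ι ι R)
    (hcompl : Y * (Θ - Y)ᵀ = c • (allOnes ι ι R - 1)) :
    (((a + c) / (b * c)) • Y + (-(a / (b * c))) • Θ) * Yᵀ = 1 := by
  have hΘ : Θ * Yᵀ = (Y * Yᵀ + Y * (Θ - Y)ᵀ)ᵀ := by
    rw [transpose_sub, ← Matrix.mul_add, add_sub_cancel, transpose_mul, transpose_transpose]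
  rw [Matrix.add_mul, Matrix.smul_mul, Matrix.smul_mul, hΘ, hcompl, hgram]
  simp only [transpose_add, transpose_smul, transpose_sub, transpose_one, transpose_allOnes]
  match_scalars <;> field_simp <;> ring

end Matrix

open Finset

section SubsetIndicator

variable (α : Type*) [Fintype α] [DecidableEq α] (R : Type*)

def subsetIndicator (m : ℕ) [Zero R] [One R] :
    Matrix α ((univ : Finset α).powersetCard m) R :=
  of fun i S => if i ∈ (S : Finset α) then 1 else 0

-- The index type of `allOnes` is spelled out: left as `_`, `*` elaborates to `CStarMatrix`'s product.
theorem subsetIndicator_mul_allOnes_transpose [Semiring R] (k : ℕ) :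
    subsetIndicator α R (k + 1) * (allOnes α ((univ : Finset α).powersetCard (k + 1)) R)ᵀ
      = ((Fintype.card α - 1).choose k : R) • allOnes α α R := by
  ext i j
  simp only [subsetIndicator, transpose_allOnes, mul_apply, of_apply, allOnes_apply, mul_one,
    Matrix.smul_apply, smul_eq_mul]
  rw [sum_coe_sort (univ.powersetCard (k + 1)) (fun S => if i ∈ S then (1 : R) else 0), sum_boole,
    card_filter_mem_powersetCard_add_one (mem_univ i), card_univ]

theorem subsetIndicator_mul_compl_transpose [Ring R] (k : ℕ) :
    subsetIndicator α R (k + 1) * (allOnes _ _ R - subsetIndicator α R (k + 1))ᵀ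
      = ((Fintype.card α - 2).choose k : R) • (allOnes α α R - 1) := by
  ext i j
  simp only [subsetIndicator, mul_apply, of_apply, transpose_apply, Matrix.sub_apply,
    allOnes_apply, Matrix.smul_apply, smul_eq_mul]
  rw [sum_coe_sort (univ.powersetCard (k + 1))
    (fun S => (if i ∈ S then (1 : R) else 0) * (1 - if j ∈ S then 1 else 0))]
  have hterm (S : Finset α) : (if i ∈ S then (1 : R) else 0) * (1 - if j ∈ S then 1 else 0)
      = if i ∈ S ∧ j ∉ S then 1 else 0 := by
    split_ifs <;> simp_all
  rw [sum_congr rfl fun S _ => hterm S, sum_boole]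
  rcases eq_or_ne i j with rfl | hij
  · simp
  · rw [card_filter_mem_and_notMem_powersetCard_add_one (mem_univ i) (mem_univ j) hij, card_univ,
      one_apply_ne hij, sub_zero, mul_one]

theorem subsetIndicator_mul_transpose [Ring R] (k : ℕ) :
    subsetIndicator α R (k + 1) * (subsetIndicator α R (k + 1))ᵀ
      = ((Fintype.card α - 2).choose k : R) • (1 : Matrix α α R)
        + ((Fintype.card α - 1).choose k - (Fintype.card α - 2).choose k : R) • allOnes α α R := by
  set Y := subsetIndicator α R (k + 1)
  have hsplit : Y * Yᵀ
      = Y * (allOnes α ((univ : Finset α).powersetCard (k + 1)) R)ᵀ - Y * (allOnes _ _ R - Y)ᵀ := by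
    rw [transpose_sub, Matrix.mul_sub, sub_sub_cancel]
  rw [hsplit, subsetIndicator_mul_allOnes_transpose, subsetIndicator_mul_compl_transpose,
    smul_sub, sub_smul]
  abel

end SubsetIndicator

/-- With `a = ((m-1)/(K-1))·C(K-1,m-1)`, `b = (m/K)·C(K,m)`, `c = (m/(K-1))·C(K-1,m)`,
`τ = (a+c)/(bc)`, `η = −a/(bc)`, the matrix `τ·Y_mᵀ + η·Θᵀ` is a right inverse of `Y_m`:
`(τ·Y_m + η·Θ)·Y_mᵀ = I`. -/
theorem subset_indicator_right_inverse (K m : ℕ) (hm : 1 ≤ m) (hK : m ≤ K - 1)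
    (Y Θ : Matrix (Fin K) ((Finset.univ : Finset (Fin K)).powersetCard m) ℝ)
    (hY : ∀ i S, Y i S = if i ∈ (S : Finset (Fin K)) then 1 else 0)
    (hΘ : ∀ i S, Θ i S = 1)
    (a b c : ℝ)
    (ha : a = ((m : ℝ) - 1) / ((K : ℝ) - 1) * ((K - 1).choose (m - 1)))
    (hb : b = (m : ℝ) / K * (K.choose m))
    (hc : c = (m : ℝ) / ((K : ℝ) - 1) * ((K - 1).choose m)) :
    (((a + c) / (b * c)) • Y + (-(a / (b * c))) • Θ) * Yᵀ = (1 : Matrix (Fin K) (Fin K) ℝ) := by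
  obtain ⟨k, rfl⟩ : ∃ k, m = k + 1 := ⟨m - 1, by omega⟩
  obtain ⟨l, rfl⟩ : ∃ l, K = l + 1 + 1 := ⟨K - 2, by omega⟩
  obtain rfl : Y = subsetIndicator (Fin (l + 1 + 1)) ℝ (k + 1) := Matrix.ext hY
  obtain rfl : Θ = allOnes _ _ ℝ := Matrix.ext hΘ
  have hl : ((l + 1 + 1 : ℕ) : ℝ) - 1 = (l + 1 : ℕ) := by push_cast; ring
  have hk : ((k + 1 : ℕ) : ℝ) - 1 = k := by push_cast; ring
  simp only [hl, hk, Nat.add_sub_cancel] at ha hc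
  rw [Nat.cast_add_one_div_mul_choose_add_one] at hb hc
  rw [Nat.cast_div_mul_choose_eq_sub, ← hb, ← hc] at ha
  have hb0 : b ≠ 0 := by rw [hb]; exact_mod_cast (Nat.choose_pos (by omega)).ne'
  have hc0 : c ≠ 0 := by rw [hc]; exact_mod_cast (Nat.choose_pos (by omega)).ne'
  refine mul_transpose_eq_one_of_gram _ _ hb0 hc0 ?_ ?_
  · rw [ha, sub_sub_cancel, hb, hc]
    simpa using subsetIndicator_mul_transpose (Fin (l + 1 + 1)) ℝ k
  · rw [hc]
    simpa using subsetIndicator_mul_compl_transpose (Fin (l + 1 + 1)) ℝ k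
end

section
/- Let S ⊆ [K] with |S| = m, 1 ≤ m < K. For every z ∈ ℝ^K and every c > 0, L_PAL(z, S) ≥ (1/(1+c))·(m/(K−m))·⟨𝟏 − (K/m)·𝕀_S, z⟩ + c₂, where c₂ = (cm/(c+1))·log m + (mc/(1+c))·log((c+1)/c) + (m/(c+1))·log((K−m)(c+1)). -/
/-!
The loss `L(z) = #S · log ∑ exp z - ∑_{k ∈ S} z_k` is convex in `z`, so it lies above its
tangent plane at any point. At `z* = log p` for a probability vector `p`, the softmax is `p`
itself and the gradient is `#S · p - 𝕀_S`; the tangent bound is then Gibbs' inequality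
`∑ p_j (z_j - log p_j) ≤ log ∑ exp z_j`, i.e. Jensen for `log`. Taking `p` equal to
`c / ((1 + c) m)` on `S` and to `1 / ((1 + c) (K - m))` off `S` makes the gradient the vector
`(1 / (1 + c)) (m / (K - m)) (𝟏 - (K / m) 𝕀_S)`, and `-m ∑ p_j log p_j` is the constant `c₂`.
-/

open Finset Real

theorem Real.sum_mul_sub_log_le_log_sum_exp {ι : Type*} (s : Finset ι) (w z : ι → ℝ)
    (hw : ∀ i ∈ s, 0 < w i) (hw₁ : ∑ i ∈ s, w i = 1) :
    ∑ i ∈ s, w i * (z i - log (w i)) ≤ log (∑ i ∈ s, exp (z i)) := by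
  have jensen := strictConcaveOn_log_Ioi.concaveOn.le_map_sum (t := s) (w := w)
    (p := fun i ↦ exp (z i) / w i) (fun i hi ↦ (hw i hi).le) hw₁
    (fun i hi ↦ div_pos (exp_pos _) (hw i hi))
  calc ∑ i ∈ s, w i * (z i - log (w i))
      = ∑ i ∈ s, w i • log (exp (z i) / w i) := sum_congr rfl fun i hi ↦ by
        rw [smul_eq_mul, log_div (exp_ne_zero _) (hw i hi).ne', log_exp]
    _ ≤ log (∑ i ∈ s, w i • (exp (z i) / w i)) := jensen
    _ = log (∑ i ∈ s, exp (z i)) := congrArg log <| sum_congr rfl fun i hi ↦ by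
        rw [smul_eq_mul, mul_div_cancel₀ _ (hw i hi).ne']

theorem Fintype.sum_apply_ite_mem {ι α M : Type*} [Fintype ι] [DecidableEq ι]
    [AddCommMonoid M] (S : Finset ι) (f : α → M) (a b : α) :
    ∑ j, f (if j ∈ S then a else b) = #S • f a + #Sᶜ • f b := by
  simp [apply_ite, sum_ite, ← compl_filter]

section Softmax

variable {ι : Type*} [Fintype ι]

theorem sum_neg_log_softmax_eq [Nonempty ι] (S : Finset ι) (z : ι → ℝ) :
    ∑ k ∈ S, -log (exp (z k) / ∑ ℓ, exp (z ℓ))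
      = #S * log (∑ ℓ, exp (z ℓ)) - ∑ k ∈ S, z k := by
  have hT : ∑ ℓ, exp (z ℓ) ≠ 0 := (sum_pos (fun ℓ _ ↦ exp_pos (z ℓ)) univ_nonempty).ne'
  simp only [log_div (exp_ne_zero _) hT, log_exp, neg_sub, sum_sub_distrib, sum_const,
    nsmul_eq_mul]

theorem le_sum_neg_log_softmax [DecidableEq ι] (S : Finset ι) (z p : ι → ℝ)
    (hp : ∀ j, 0 < p j) (hp₁ : ∑ j, p j = 1) :
    ∑ j, (#S * p j - if j ∈ S then 1 else 0) * z j - #S * ∑ j, p j * log (p j)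
      ≤ ∑ k ∈ S, -log (exp (z k) / ∑ ℓ, exp (z ℓ)) := by
  have : Nonempty ι := univ_nonempty_iff.mp (nonempty_of_sum_ne_zero (hp₁ ▸ one_ne_zero))
  have gibbs := sum_mul_sub_log_le_log_sum_exp univ p z (fun j _ ↦ hp j) hp₁
  rw [sum_neg_log_softmax_eq]
  simp only [sub_mul, mul_assoc, ite_mul, one_mul, zero_mul, sum_sub_distrib, ← mul_sum,
    Fintype.sum_ite_mem, mul_sub] at gibbs ⊢
  have := mul_le_mul_of_nonneg_left gibbs (Nat.cast_nonneg (α := ℝ) #S)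
  linarith

end Softmax

/-- Lower bound for the pick-all-labels cross-entropy: for `S ⊆ [K]` with `|S| = m`,
`1 ≤ m < K`, every `z ∈ ℝ^K` and `c > 0`,
`L_PAL(z,S) ≥ (1/(1+c))·(m/(K−m))·⟨𝟏 − (K/m)·𝕀_S, z⟩ + c₂` where
`c₂ = (cm/(c+1))·log m + (mc/(1+c))·log((c+1)/c) + (m/(c+1))·log((K−m)(c+1))`. -/
theorem pal_lower_bound (K m : ℕ) (hm : 1 ≤ m) (hmK : m < K)
    (S : Finset (Fin K)) (hS : S.card = m) (z : Fin K → ℝ) (c : ℝ) (hc : 0 < c) :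
    (∑ k ∈ S, -Real.log (Real.exp (z k) / ∑ ℓ, Real.exp (z ℓ)))
      ≥ (1 / (1 + c)) * ((m : ℝ) / ((K : ℝ) - m)) *
          (∑ j, (1 - (K : ℝ) / m * (if j ∈ S then 1 else 0)) * z j)
        + (c * m / (c + 1) * Real.log m
            + m * c / (1 + c) * Real.log ((c + 1) / c)
            + (m : ℝ) / (c + 1) * Real.log (((K : ℝ) - m) * (c + 1))) := by
  have hm₀ : (0 : ℝ) < m := by exact_mod_cast hm
  have hKm : (0 : ℝ) < K - m := sub_pos.mpr (by exact_mod_cast hmK)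
  have hc₁ : (0 : ℝ) < 1 + c := by positivity
  have hcompl : (#Sᶜ : ℝ) = K - m := by
    rw [card_compl, Fintype.card_fin, hS, Nat.cast_sub hmK.le]
  set a := c / ((1 + c) * m) with ha
  set b := 1 / ((1 + c) * (K - m)) with hb
  have hsum : ∑ j, (if j ∈ S then a else b) = 1 := by
    refine (Fintype.sum_apply_ite_mem S id a b).trans ?_
    rw [nsmul_eq_mul, nsmul_eq_mul, hcompl, hS, id, id, ha, hb]
    field_simp
    ring
  have hla : log a = log c - log (1 + c) - log m := by
    rw [ha, log_div hc.ne' (by positivity), log_mul hc₁.ne' hm₀.ne', sub_sub]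
  have hlb : log b = -(log (1 + c) + log (K - m)) := by
    rw [hb, one_div, log_inv, log_mul hc₁.ne' hKm.ne']
  refine le_of_eq_of_le ?_ (le_sum_neg_log_softmax S z _ (fun j ↦ by positivity) hsum)
  rw [hS, mul_sum, Fintype.sum_apply_ite_mem S (fun x ↦ x * log x), nsmul_eq_mul,
    nsmul_eq_mul, hcompl, hS]
  congr 1
  · refine sum_congr rfl fun j _ ↦ ?_
    split_ifs <;> simp only [ha, hb] <;> field_simp <;> ring
  · rw [hla, hlb, add_comm c 1, log_div hc₁.ne' hc.ne', log_mul hKm.ne' hc₁.ne', ha, hb]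
    field_simp
    ring
end

section
/- In the lower bound L_PAL(z, S) ≥ γ·⟨𝟏 − (K/m)·𝕀_S, z⟩ + c₂ with γ = (1/(1+c))·(m/(K−m)) and c₂ as specified, equality holds if and only if z is constant equal to z_in on S, constant equal to z_out on S^c, and z_in − z_out = log(((K−m)/m)·c). -/
/-!
With `w = ∑ exp z`, the loss is `m · log w − ∑_S z`, and the right-hand side equals
`m · ∑ q (z − log q) − ∑_S z` for the probability vector `q` that spreads mass `c / (1 + c)`
uniformly over `S` and `1 / (1 + c)` uniformly over `Sᶜ`. Jensen's inequality for the strictly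
convex `exp`, applied to `z − log q` with weights `q`, gives `∑ q (z − log q) ≤ log w`, with
equality iff `z − log q` is constant. So equality holds iff `z` is `log q` up to a shift: a level
on `S` and a level on `Sᶜ` whose gap is `log (q_in / q_out) = log ((K − m) c / m)`.
-/

open Finset Real

theorem sum_ite_mem_eq_sum_add_sum_compl {ι M : Type*} [Fintype ι] [DecidableEq ι]
    [AddCommMonoid M] (S : Finset ι) (f g : ι → M) :
    ∑ k, (if k ∈ S then f k else g k) = ∑ k ∈ S, f k + ∑ k ∈ Sᶜ, g k := by
  rw [← sum_add_sum_compl S]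
  congr 1 <;> refine sum_congr rfl fun k hk => ?_
  · rw [if_pos hk]
  · rw [if_neg (mem_compl.mp hk)]

theorem exists_forall_eq_ite_add_iff {ι G : Type*} [DecidableEq ι] [AddCommGroup G]
    (S : Finset ι) (α β : G) (z : ι → G) :
    (∃ a, ∀ k, z k = (if k ∈ S then α else β) + a) ↔
      ∃ zin zout, (∀ i ∈ S, z i = zin) ∧ (∀ i ∉ S, z i = zout) ∧ zin - zout = α - β := by
  constructor
  · rintro ⟨a, hz⟩
    refine ⟨α + a, β + a, fun i hi => by simp [hz i, hi], fun i hi => by simp [hz i, hi], ?_⟩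
    abel
  · rintro ⟨zin, zout, hin, hout, hgap⟩
    refine ⟨zin - α, fun k => ?_⟩
    by_cases hk : k ∈ S
    · simp [hin k hk, hk]
    · rw [hout k hk, if_neg hk, sub_eq_sub_iff_sub_eq_sub.mp hgap]
      abel

theorem sum_neg_log_softmax {ι : Type*} [Fintype ι] (S : Finset ι) (z : ι → ℝ) :
    ∑ k ∈ S, -log (exp (z k) / ∑ ℓ, exp (z ℓ)) =
      S.card * log (∑ ℓ, exp (z ℓ)) - ∑ k ∈ S, z k := by
  have hpos : ∀ k, 0 < ∑ ℓ, exp (z ℓ) := fun k =>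
    sum_pos' (fun ℓ _ => (exp_pos _).le) ⟨k, mem_univ k, exp_pos _⟩
  rw [sum_congr rfl fun k _ => by rw [log_div (exp_ne_zero _) (hpos k).ne', log_exp, neg_sub],
    sum_sub_distrib, sum_const, nsmul_eq_mul]

theorem log_sum_exp_eq_sum_mul_sub_log_iff {ι : Type*} [Fintype ι] {q : ι → ℝ}
    (hq : ∀ k, 0 < q k) (hq1 : ∑ k, q k = 1) (z : ι → ℝ) :
    log (∑ k, exp (z k)) = ∑ k, q k * (z k - log (q k)) ↔ ∃ a, ∀ k, z k = log (q k) + a := by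
  set p := fun k => z k - log (q k)
  set μ := ∑ k, q k * p k
  have hexp : ∑ k, exp (z k) = ∑ k, q k * exp (p k) := by
    refine sum_congr rfl fun k _ => ?_
    rw [exp_sub, exp_log (hq k), mul_div_cancel₀ _ (hq k).ne']
  have hpos : 0 < ∑ k, exp (z k) := by
    obtain ⟨k, -⟩ := nonempty_of_sum_ne_zero (hq1.trans_ne one_ne_zero)
    exact sum_pos (fun ℓ _ => exp_pos _) ⟨k, mem_univ k⟩
  have hjensen : exp μ = ∑ k, q k * exp (p k) ↔ ∀ j, p j = μ := by
    simpa using strictConvexOn_exp.map_sum_eq_iff (t := univ) (fun k _ => hq k) hq1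
      (p := p) fun k _ => Set.mem_univ _
  calc log (∑ k, exp (z k)) = μ ↔ exp μ = ∑ k, exp (z k) :=
        ⟨fun h => h ▸ exp_log hpos, fun h => h ▸ log_exp μ⟩
    _ ↔ ∀ j, p j = μ := by rw [hexp, hjensen]
    _ ↔ ∃ a, ∀ k, z k = log (q k) + a := by
      refine ⟨fun h => ⟨μ, fun k => by linarith [h k]⟩, fun ⟨a, ha⟩ j => ?_⟩
      have hp : ∀ k, p k = a := fun k => by simp only [p, ha k]; ring
      simp only [μ, hp, ← sum_mul, hq1, one_mul]

noncomputable def palWeight (K m : ℕ) (c : ℝ) (S : Finset (Fin K)) (k : Fin K) : ℝ :=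
  if k ∈ S then c / ((1 + c) * m) else 1 / ((1 + c) * ((K : ℝ) - m))

section
variable {K m : ℕ} {c : ℝ} {S : Finset (Fin K)}

theorem card_compl_eq_sub (hmK : m < K) (hS : S.card = m) : ((Sᶜ.card : ℕ) : ℝ) = K - m := by
  rw [card_compl, Fintype.card_fin, hS, Nat.cast_sub hmK.le]

theorem palWeight_pos (hm : 0 < m) (hmK : m < K) (hc : 0 < c) (k : Fin K) :
    0 < palWeight K m c S k := by
  have : 0 < (K : ℝ) - m := sub_pos.mpr (by exact_mod_cast hmK)
  unfold palWeight
  split_ifs <;> positivity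

theorem sum_palWeight (hm : 0 < m) (hmK : m < K) (hS : S.card = m) (hc : 0 < c) :
    ∑ k, palWeight K m c S k = 1 := by
  have : 0 < (K : ℝ) - m := sub_pos.mpr (by exact_mod_cast hmK)
  simp only [palWeight]
  rw [sum_ite_mem_eq_sum_add_sum_compl, sum_const, sum_const, nsmul_eq_mul, nsmul_eq_mul, hS,
    card_compl_eq_sub hmK hS]
  field_simp
  ring

theorem pal_lower_bound_eq (hm : 0 < m) (hmK : m < K) (hS : S.card = m) (hc : 0 < c)
    (z : Fin K → ℝ) :
    (1 / (1 + c)) * ((m : ℝ) / ((K : ℝ) - m)) *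
          (∑ j, (1 - (K : ℝ) / m * (if j ∈ S then 1 else 0)) * z j)
        + (c * m / (c + 1) * log m
            + m * c / (1 + c) * log ((c + 1) / c)
            + (m : ℝ) / (c + 1) * log (((K : ℝ) - m) * (c + 1)))
      = m * ∑ k, palWeight K m c S k * (z k - log (palWeight K m c S k)) - ∑ k ∈ S, z k := by
  have hm0 : (0 : ℝ) < m := by exact_mod_cast hm
  have hKm : 0 < (K : ℝ) - m := sub_pos.mpr (by exact_mod_cast hmK)
  have hc1 : 0 < 1 + c := by linarith
  set qin := c / ((1 + c) * m)
  set qout := 1 / ((1 + c) * ((K : ℝ) - m))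
  have hweighted : ∑ k, palWeight K m c S k * (z k - log (palWeight K m c S k))
      = qin * (∑ k ∈ S, z k - m * log qin) + qout * (∑ k ∈ Sᶜ, z k - (K - m) * log qout) := by
    have hk : ∀ k, palWeight K m c S k * (z k - log (palWeight K m c S k))
        = if k ∈ S then qin * (z k - log qin) else qout * (z k - log qout) := by
      intro k; unfold palWeight; split_ifs <;> rfl
    rw [sum_congr rfl fun k _ => hk k, sum_ite_mem_eq_sum_add_sum_compl, ← mul_sum, ← mul_sum,
      sum_sub_distrib, sum_sub_distrib, sum_const, sum_const, nsmul_eq_mul, nsmul_eq_mul, hS,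
      card_compl_eq_sub hmK hS]
  have hcentered : ∑ j, (1 - (K : ℝ) / m * (if j ∈ S then 1 else 0)) * z j
      = (1 - K / m) * ∑ k ∈ S, z k + ∑ k ∈ Sᶜ, z k := by
    have hj : ∀ j, (1 - (K : ℝ) / m * (if j ∈ S then 1 else 0)) * z j
        = if j ∈ S then (1 - K / m) * z j else z j := by
      intro j; split_ifs <;> ring
    rw [sum_congr rfl fun j _ => hj j, sum_ite_mem_eq_sum_add_sum_compl, ← mul_sum]
  have hlog_in : log qin = log c - log (1 + c) - log m := by
    rw [log_div hc.ne' (by positivity), log_mul hc1.ne' hm0.ne']; ring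
  have hlog_out : log qout = -(log (1 + c) + log ((K : ℝ) - m)) := by
    rw [log_div one_ne_zero (by positivity), log_one, log_mul hc1.ne' hKm.ne', zero_sub]
  rw [hweighted, hcentered, hlog_in, hlog_out, add_comm c 1, log_div hc1.ne' hc.ne',
    log_mul hKm.ne' hc1.ne']
  simp only [qin, qout]
  field_simp
  ring

theorem log_palWeight_in_sub_out (hm : 0 < m) (hmK : m < K) (hc : 0 < c) :
    log (c / ((1 + c) * m)) - log (1 / ((1 + c) * ((K : ℝ) - m))) =
      log (((K : ℝ) - m) / m * c) := by
  have hm0 : (0 : ℝ) < m := by exact_mod_cast hm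
  have hKm : 0 < (K : ℝ) - m := sub_pos.mpr (by exact_mod_cast hmK)
  rw [← log_div (by positivity) (by positivity)]
  congr 1
  field_simp
end

/-- Equality case of the pick-all-labels lower bound: with
`γ = (1/(1+c))·(m/(K−m))` and `c₂` as specified, equality holds iff `z` equals a constant
`z_in` on `S`, a constant `z_out` on `S^c`, and `z_in − z_out = log(((K−m)/m)·c)`. -/
theorem pal_lower_bound_equality_iff (K m : ℕ) (hm : 1 ≤ m) (hmK : m < K)
    (S : Finset (Fin K)) (hS : S.card = m) (z : Fin K → ℝ) (c : ℝ) (hc : 0 < c) :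
    ((∑ k ∈ S, -Real.log (Real.exp (z k) / ∑ ℓ, Real.exp (z ℓ)))
      = (1 / (1 + c)) * ((m : ℝ) / ((K : ℝ) - m)) *
          (∑ j, (1 - (K : ℝ) / m * (if j ∈ S then 1 else 0)) * z j)
        + (c * m / (c + 1) * Real.log m
            + m * c / (1 + c) * Real.log ((c + 1) / c)
            + (m : ℝ) / (c + 1) * Real.log (((K : ℝ) - m) * (c + 1))))
    ↔ ∃ zin zout : ℝ,
        (∀ i ∈ S, z i = zin) ∧ (∀ i ∉ S, z i = zout) ∧
        zin - zout = Real.log ((((K : ℝ) - m) / m) * c) := by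
  have hm0 : (m : ℝ) ≠ 0 := by positivity
  rw [sum_neg_log_softmax, hS, pal_lower_bound_eq hm hmK hS hc, sub_left_inj, mul_right_inj' hm0,
    log_sum_exp_eq_sum_mul_sub_log_iff (palWeight_pos hm hmK hc) (sum_palWeight hm hmK hS hc)]
  simp only [palWeight, apply_ite log]
  rw [exists_forall_eq_ite_add_iff, log_palWeight_in_sub_out hm hmK hc]
end
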